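/- Fix p ∈ H. For every q ∈ H, the limit lim_{n→∞} |(q-p)^{*n}|^{1/n} exists and equals σ(q,p). -/

import Mathlib

local notation "ℍ" => Quaternion ℝ

/-- Convolution (star) product of coefficient sequences. -/
noncomputable def conv (a b : ℕ → ℍ) : ℕ → ℍ := fun n => ∑ k ∈ Finset.range (n+1), a k * b (n-k)

/-- Coefficient sequence of the polynomial `q - p` (right coefficients). -/
noncomputable def binomSeq (p : ℍ) : ℕ → ℍ := fun k => if k = 0 then -p else if k = 1 then 1 else 0

/-- n-fold star (convolution) power of a coefficient sequence. -/
noncomputable def convPow (a : ℕ → ℍ) : ℕ → ℕ → ℍ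
  | 0 => fun k => if k = 0 then 1 else 0
  | n+1 => conv (convPow a n) a

/-- The regular power `(q-p)^{*n}` evaluated at `q`. -/
noncomputable def starPow (p : ℍ) (n : ℕ) (q : ℍ) : ℍ :=
  ∑ k ∈ Finset.range (n+1), q^k * convPow (binomSeq p) n k

noncomputable def omegaDist (q p : ℍ) : ℝ :=
  Real.sqrt ((q.re - p.re)^2 + (‖q.im‖ + ‖p.im‖)^2)

/-- `q` and `p` lie in a common complex line `L_I = ℝ + Iℝ`. -/
def SameLine (q p : ℍ) : Prop :=
  ∃ I : ℍ, I^2 = -1 ∧ (∃ a b : ℝ, q = (a : ℍ) + b • I) ∧ (∃ a b : ℝ, p = (a : ℍ) + b • I)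

open Classical in
noncomputable def sigmaDist (q p : ℍ) : ℝ :=
  if SameLine q p then ‖q - p‖ else omegaDist q p

/-!
Write `S n = (q - p)^{*n}(q)`. The star product with `X - p` gives `S (n + 1) = q S n - S n p`.
If `q` and `p` lie on a common complex line they commute and `S n = (q - p)^n`. Otherwise
`q = x + y I` and `p = u + v J` with distinct imaginary units `I ≠ J`. The maps `X ↦ I X ∓ X J`
commute with `X ↦ q X - X p`, and `I ∓ J` are eigenvectors of the latter for the eigenvalues
`b = (x - u) + (y + v) I` and `a = (x - u) + (y - v) I`, both commuting with `q`. Hence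
`I S n - S n J = bⁿ (I - J)` and `I S n + S n J = aⁿ (I + J)`; as `‖a‖ ≤ ‖b‖` this pins `‖S n‖`
between `‖I - J‖ ‖b‖ⁿ / 2` and `2 ‖b‖ⁿ`, and `‖b‖ = σ(q, p)`.
-/

open Filter Topology

section SliceAlgebra

variable {A : Type*} [Ring A] [Algebra ℝ A]

theorem commute_algebraMap_add_smul (I : A) (a b c d : ℝ) :
    Commute (algebraMap ℝ A a + b • I) (algebraMap ℝ A c + d • I) :=
  (Algebra.commute_algebraMap_left a _).add_left <|
    ((Algebra.commute_algebraMap_right c I).smul_left b).add_right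
      (((Commute.refl I).smul_left b).smul_right d)

theorem algebraMap_add_smul_mul_sub {I J : A} (hI : I * I = -1) (hJ : J * J = -1)
    (x y u v : ℝ) :
    (algebraMap ℝ A x + y • I) * (I - J) - (I - J) * (algebraMap ℝ A u + v • J) =
      (algebraMap ℝ A (x - u) + (y + v) • I) * (I - J) := by
  simp only [mul_sub, sub_mul, add_mul, mul_add, smul_mul_assoc, mul_smul_comm, hI, hJ,
    Algebra.commutes, map_sub, add_smul]
  module

end SliceAlgebra

section Recurrence

variable {R : Type*} [Ring R] {q p : R} {S : ℕ → R}

theorem eq_pow_mul_of_succ_eq {c W : R} (hc : Commute q c) (hS : ∀ n, S (n + 1) = q * S n - S n * p)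
    (h0 : S 0 = W) (hW : q * W - W * p = c * W) (n : ℕ) : S n = c ^ n * W := by
  induction n with
  | zero => rw [h0, pow_zero, one_mul]
  | succ n ih => rw [hS, ih, ← mul_assoc, (hc.pow_right n).eq, mul_assoc, mul_assoc, ← mul_sub,
      hW, pow_succ, mul_assoc]

theorem mul_sub_mul_eq_pow_mul {I J c : R} (hI : Commute q I) (hJ : Commute p J)
    (hc : Commute q c) (hS : ∀ n, S (n + 1) = q * S n - S n * p) (h0 : S 0 = 1)
    (hW : q * (I - J) - (I - J) * p = c * (I - J)) (n : ℕ) :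
    I * S n - S n * J = c ^ n * (I - J) := by
  refine eq_pow_mul_of_succ_eq (S := fun n => I * S n - S n * J) hc (fun n => ?_)
    (by simp only [h0, mul_one, one_mul]) hW n
  simp only [hS, mul_sub, sub_mul, mul_assoc]
  rw [← mul_assoc I q, ← hI.eq, mul_assoc, hJ.eq]
  abel

end Recurrence

section NormBounds

variable {K : Type*} [NormedDivisionRing K] {I J S a b : K}

theorem norm_eq_one_of_mul_self_eq_neg_one (hI : I * I = -1) : ‖I‖ = 1 := by
  have h : ‖I‖ * ‖I‖ = 1 := by rw [← norm_mul, hI, norm_neg, norm_one]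
  nlinarith [norm_nonneg I]

theorem norm_mul_norm_sub_le (hI : ‖I‖ = 1) (hJ : ‖J‖ = 1) (hb : I * S - S * J = b * (I - J)) :
    ‖b‖ * ‖I - J‖ ≤ 2 * ‖S‖ :=
  calc ‖b‖ * ‖I - J‖ = ‖I * S - S * J‖ := by rw [hb, norm_mul]
    _ ≤ ‖I * S‖ + ‖S * J‖ := norm_sub_le _ _
    _ = 2 * ‖S‖ := by rw [norm_mul, norm_mul, hI, hJ]; ring

theorem norm_le_two_mul [NormedAlgebra ℝ K] (hI : ‖I‖ = 1) (hJ : ‖J‖ = 1)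
    (hb : I * S - S * J = b * (I - J)) (ha : I * S + S * J = a * (I + J)) (hab : ‖a‖ ≤ ‖b‖) :
    ‖S‖ ≤ 2 * ‖b‖ := by
  have hIJ : ‖I - J‖ ≤ 2 := (norm_sub_le I J).trans (by rw [hI, hJ]; norm_num)
  have hIJ' : ‖I + J‖ ≤ 2 := (norm_add_le I J).trans (by rw [hI, hJ]; norm_num)
  have h2S : 2 * ‖S‖ = ‖b * (I - J) + a * (I + J)‖ := by
    rw [← hb, ← ha, sub_add_add_cancel, ← two_smul ℝ, norm_smul, norm_mul, hI, one_mul,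
      Real.norm_two]
  have : 2 * ‖S‖ ≤ 4 * ‖b‖ := by
    rw [h2S]
    refine (norm_add_le _ _).trans ?_
    rw [norm_mul, norm_mul]
    nlinarith [norm_nonneg a, norm_nonneg b]
  linarith

end NormBounds

theorem tendsto_rpow_one_div_of_le_of_le {s : ℕ → ℝ} {r c C : ℝ} (hr : 0 ≤ r) (hc : 0 < c)
    (hlow : ∀ n, c * r ^ n ≤ s n) (hup : ∀ n, s n ≤ C * r ^ n) :
    Tendsto (fun n : ℕ => s n ^ (1 / (n : ℝ))) atTop (𝓝 r) := by
  have hC : 0 < C := hc.trans_le (by simpa using (hlow 0).trans (hup 0))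
  have root : ∀ {d : ℝ}, 0 < d →
      Tendsto (fun n : ℕ => (d * r ^ n) ^ (1 / (n : ℝ))) atTop (𝓝 r) := by
    intro d hd
    have hlim : Tendsto (fun n : ℕ => d ^ (1 / (n : ℝ)) * r) atTop (𝓝 r) := by
      simpa using ((tendsto_const_nhds (x := d)).rpow tendsto_one_div_atTop_nhds_zero_nat
        (Or.inl hd.ne')).mul_const r
    refine hlim.congr' ?_
    filter_upwards [eventually_ne_atTop 0] with n hn
    rw [Real.mul_rpow hd.le (by positivity), ← Real.rpow_natCast, ← Real.rpow_mul hr,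
      mul_one_div_cancel (Nat.cast_ne_zero.mpr hn), Real.rpow_one]
  refine tendsto_of_tendsto_of_tendsto_of_le_of_le (root hc) (root hC) (fun n => ?_) (fun n => ?_)
  · exact Real.rpow_le_rpow (by positivity) (hlow n) (by positivity)
  · exact Real.rpow_le_rpow ((by positivity : 0 ≤ c * r ^ n).trans (hlow n)) (hup n) (by positivity)

theorem conv_binomSeq (a : ℕ → ℍ) (p : ℍ) (k : ℕ) :
    conv a (binomSeq p) k = a k * -p + if 1 ≤ k then a (k - 1) else 0 := by
  rcases k with _ | k
  · simp [conv, binomSeq]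
  · rw [conv, Finset.sum_range_succ, Finset.sum_range_succ, Finset.sum_eq_zero fun j hj => ?_]
    · simp [binomSeq, add_comm]
    · have hj := Finset.mem_range.mp hj
      simp [binomSeq, show k + 1 - j ≠ 0 by omega, show k + 1 - j ≠ 1 by omega]

theorem convPow_binomSeq_of_lt (p : ℍ) {n k : ℕ} (h : n < k) : convPow (binomSeq p) n k = 0 := by
  induction n generalizing k with
  | zero => simp [convPow, h.ne']
  | succ n ih => rw [convPow, conv_binomSeq, ih (by omega), ih (by omega)]; simp

theorem sum_pow_mul_conv_binomSeq (p q : ℍ) {c : ℕ → ℍ} {n : ℕ} (hc : c (n + 1) = 0) :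
    ∑ k ∈ Finset.range (n + 2), q ^ k * conv c (binomSeq p) k =
      q * ∑ k ∈ Finset.range (n + 1), q ^ k * c k -
        (∑ k ∈ Finset.range (n + 1), q ^ k * c k) * p := by
  simp only [conv_binomSeq, mul_add, Finset.sum_add_distrib]
  rw [Finset.sum_range_succ _ (n + 1), Finset.sum_range_succ' _ (n + 1), hc, Finset.mul_sum,
    Finset.sum_mul]
  simp [pow_succ', mul_assoc, sub_eq_add_neg, add_comm]

theorem starPow_zero (p q : ℍ) : starPow p 0 q = 1 := by
  simp [starPow, convPow]

theorem starPow_succ (p q : ℍ) (n : ℕ) :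
    starPow p (n + 1) q = q * starPow p n q - starPow p n q * p :=
  sum_pow_mul_conv_binomSeq p q (convPow_binomSeq_of_lt p (Nat.lt_succ_self n))

theorem starPow_eq_sub_pow {p q : ℍ} (h : Commute q p) (n : ℕ) : starPow p n q = (q - p) ^ n := by
  simpa using eq_pow_mul_of_succ_eq (S := fun n => starPow p n q) ((Commute.refl q).sub_right h)
    (starPow_succ p q) (starPow_zero p q) (by simp) n

theorem mul_starPow_sub_starPow_mul {I J : ℍ} (hI : I * I = -1) (hJ : J * J = -1)
    (x y u v : ℝ) (n : ℕ) :
    I * starPow (u + v • J) n (x + y • I) - starPow (u + v • J) n (x + y • I) * J =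
      ((x - u : ℝ) + (y + v) • I) ^ n * (I - J) :=
  mul_sub_mul_eq_pow_mul (S := fun n => starPow _ n _)
    ((Quaternion.coe_commute x I).add_left ((Commute.refl I).smul_left y))
    ((Quaternion.coe_commute u J).add_left ((Commute.refl J).smul_left v))
    (commute_algebraMap_add_smul I x y (x - u) (y + v)) (starPow_succ _ _) (starPow_zero _ _)
    (algebraMap_add_smul_mul_sub hI hJ x y u v) n

theorem norm_coe_add_smul {I : ℍ} (hI : I * I = -1) (x y : ℝ) :
    ‖(x : ℍ) + y • I‖ = √(x ^ 2 + y ^ 2) := by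
  have hnormSq : Quaternion.normSq I = 1 := by
    rw [Quaternion.normSq_eq_norm_mul_self, norm_eq_one_of_mul_self_eq_neg_one hI, mul_one]
  have hre : I.re = 0 :=
    Quaternion.sq_eq_neg_normSq.mp (by rw [sq, hI, hnormSq, Quaternion.coe_one])
  rw [← Real.sqrt_sq (norm_nonneg _), sq, ← Quaternion.normSq_eq_norm_mul_self]
  congr 1
  rw [Quaternion.normSq_def'] at hnormSq ⊢
  simp only [Quaternion.re_add, Quaternion.imI_add, Quaternion.imJ_add, Quaternion.imK_add,
    Quaternion.re_smul, Quaternion.imI_smul, Quaternion.imJ_smul, Quaternion.imK_smul,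
    Quaternion.re_coe, Quaternion.imI_coe, Quaternion.imJ_coe, Quaternion.imK_coe, smul_eq_mul,
    hre] at hnormSq ⊢
  linear_combination y ^ 2 * hnormSq

theorem tendsto_norm_starPow_of_commute {p q : ℍ} (h : Commute q p) :
    Tendsto (fun n : ℕ => ‖starPow p n q‖ ^ (1 / (n : ℝ))) atTop (𝓝 ‖q - p‖) := by
  have hnorm (n : ℕ) : ‖starPow p n q‖ = 1 * ‖q - p‖ ^ n := by
    rw [starPow_eq_sub_pow h, norm_pow, one_mul]
  exact tendsto_rpow_one_div_of_le_of_le (norm_nonneg _) one_pos (fun n => (hnorm n).ge)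
    (fun n => (hnorm n).le)

theorem tendsto_norm_starPow_of_ne {I J : ℍ} (hI : I * I = -1) (hJ : J * J = -1) (hIJ : I ≠ J)
    {x y u v : ℝ} (hy : 0 ≤ y) (hv : 0 ≤ v) :
    Tendsto (fun n : ℕ => ‖starPow (u + v • J) n (x + y • I)‖ ^ (1 / (n : ℝ))) atTop
      (𝓝 √((x - u) ^ 2 + (y + v) ^ 2)) := by
  set S := fun n => starPow (u + v • J) n (x + y • I)
  set b : ℍ := (x - u : ℝ) + (y + v) • I
  have hb := mul_starPow_sub_starPow_mul hI hJ x y u v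
  have ha (n : ℕ) : I * S n + S n * J = ((x - u : ℝ) + (y - v) • I) ^ n * (I + J) := by
    have := mul_starPow_sub_starPow_mul hI (by rwa [neg_mul_neg]) x y u (-v) n
    rwa [neg_smul_neg, mul_neg, sub_neg_eq_add, sub_neg_eq_add, ← sub_eq_add_neg] at this
  have hIn := norm_eq_one_of_mul_self_eq_neg_one hI
  have hJn := norm_eq_one_of_mul_self_eq_neg_one hJ
  rw [← norm_coe_add_smul hI]
  refine tendsto_rpow_one_div_of_le_of_le (c := ‖I - J‖ / 2) (C := 2) (norm_nonneg b)
    (by simpa [sub_eq_zero] using hIJ) (fun n => ?_) (fun n => ?_)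
  · have := norm_mul_norm_sub_le hIn hJn (hb n)
    rw [norm_pow] at this
    linarith
  · rw [← norm_pow]
    refine norm_le_two_mul hIn hJn (hb n) (ha n) ?_
    rw [norm_pow, norm_pow, norm_coe_add_smul hI, norm_coe_add_smul hI]
    exact pow_le_pow_left₀ (Real.sqrt_nonneg _) (Real.sqrt_le_sqrt (by nlinarith)) n

open Classical in
/-- For real `q` any square root of `-1` would do; `i` is chosen. -/
noncomputable def imUnit (q : ℍ) : ℍ :=
  if q.im = 0 then ((Complex.I : ℂ) : ℍ) else ‖q.im‖⁻¹ • q.im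

theorem imUnit_mul_self (q : ℍ) : imUnit q * imUnit q = -1 := by
  by_cases h : q.im = 0
  · simp only [imUnit, if_pos h]
    rw [← Quaternion.coeComplex_mul, Complex.I_mul_I, ← Complex.ofReal_one, ← Complex.ofReal_neg,
      Quaternion.coeComplex_coe, Quaternion.coe_neg, Quaternion.coe_one]
  · simp only [imUnit, if_neg h]
    have hn : ‖q.im‖ ≠ 0 := norm_ne_zero_iff.mpr h
    rw [smul_mul_smul_comm, ← sq q.im, Quaternion.im_sq, Quaternion.normSq_eq_norm_mul_self,
      smul_neg, Quaternion.smul_coe, show ‖q.im‖⁻¹ * ‖q.im‖⁻¹ * (‖q.im‖ * ‖q.im‖) = 1 by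
        field_simp, Quaternion.coe_one]

theorem coe_re_add_norm_im_smul_imUnit (q : ℍ) : (q.re : ℍ) + ‖q.im‖ • imUnit q = q := by
  by_cases h : q.im = 0
  · rw [h, norm_zero, zero_smul, add_zero, ← add_zero (q.re : ℍ), ← h, Quaternion.re_add_im]
  · simp only [imUnit, if_neg h]
    rw [smul_smul, mul_inv_cancel₀ (norm_ne_zero_iff.mpr h), one_smul, Quaternion.re_add_im]

theorem sameLine_of_imUnit_eq {q p : ℍ} (h : imUnit q = imUnit p) : SameLine q p :=
  ⟨imUnit q, by rw [sq, imUnit_mul_self], ⟨_, _, (coe_re_add_norm_im_smul_imUnit q).symm⟩,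
    ⟨_, _, by rw [h]; exact (coe_re_add_norm_im_smul_imUnit p).symm⟩⟩

theorem SameLine.commute {q p : ℍ} (h : SameLine q p) : Commute q p := by
  obtain ⟨I, -, ⟨a, b, rfl⟩, ⟨c, d, rfl⟩⟩ := h
  exact commute_algebraMap_add_smul I a b c d

theorem starPow_norm_root_tendsto (p q : ℍ) :
    Filter.Tendsto (fun n : ℕ => ‖starPow p n q‖ ^ (1/(n:ℝ))) Filter.atTop
      (nhds (sigmaDist q p)) := by
  by_cases h : SameLine q p
  · rw [sigmaDist, if_pos h]
    exact tendsto_norm_starPow_of_commute h.commute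
  · rw [sigmaDist, if_neg h, omegaDist]
    have := tendsto_norm_starPow_of_ne (imUnit_mul_self q) (imUnit_mul_self p)
      (mt sameLine_of_imUnit_eq h) (x := q.re) (u := p.re) (norm_nonneg q.im) (norm_nonneg p.im)
    rwa [coe_re_add_norm_im_smul_imUnit, coe_re_add_norm_im_smul_imUnit] at this
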